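/- The distribution matrix sequence P of the semi-Markov chain satisfies the renewal equation P = S q + q * P, and consequently P = (δI − q)^{(−1)} * S q = ψ * S q. -/

import Mathlib

open MeasureTheory Filter Topology Finset ProbabilityTheory

noncomputable section

namespace SMCPaper

variable {E : Type} [Fintype E] [DecidableEq E] {Ω : Type} [MeasurableSpace Ω]

/-- `q` is a (discrete-time) semi-Markov kernel on the finite state space `E`:
nonnegative entries, `q i j 0 = 0`, and total mass `1` from every state. -/
def IsSemiMarkovKernel (q : E → E → ℕ → ℝ) : Prop :=
  (∀ i j k, 0 ≤ q i j k) ∧ (∀ i j, q i j 0 = 0) ∧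
    ∀ i, HasSum (fun p : E × ℕ => q i p.1 p.2) 1

/-- The sojourn times `X n = S n − S (n−1)` (so `X 0 = 0` when `S 0 = 0`). -/
def Xproc (S : ℕ → Ω → ℕ) (n : ℕ) (ω : Ω) : ℕ := S n ω - S (n - 1) ω

/-- `(J, S)` is a Markov renewal chain with semi-Markov kernel `q` under the family of
probability measures `P i₀` (the chain starting at `i₀`):  `J 0 = i₀`, `S 0 = 0` a.s., and
the process `(J, X)` is a time-homogeneous Markov chain with transitions
`P(J_{n+1} = j, X_{n+1} = k | J_n = i, past) = q i j k`. -/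
def IsMarkovRenewalChain (P : E → Measure Ω) (J : ℕ → Ω → E) (S : ℕ → Ω → ℕ)
    (q : E → E → ℕ → ℝ) : Prop :=
  (∀ i, IsProbabilityMeasure (P i)) ∧
  (∀ n i, MeasurableSet {ω | J n ω = i}) ∧
  (∀ n k, MeasurableSet {ω | S n ω = k}) ∧
  (∀ i₀, P i₀ {ω | J 0 ω = i₀ ∧ S 0 ω = 0} = 1) ∧
  (∀ i₀ (n : ℕ) (js : ℕ → E) (xs : ℕ → ℕ),
    P i₀ ({ω | J (n+1) ω = js (n+1) ∧ Xproc S (n+1) ω = xs (n+1)} ∩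
        {ω | ∀ l ≤ n, J l ω = js l ∧ Xproc S l ω = xs l}) =
      ENNReal.ofReal (q (js n) (js (n+1)) (xs (n+1))) *
        P i₀ {ω | ∀ l ≤ n, J l ω = js l ∧ Xproc S l ω = xs l})

/-- First hitting time (after time `0`) of the state `j` by the embedded chain `J`. -/
def tau (J : ℕ → Ω → E) (j : E) (ω : Ω) : ℕ := sInf {n | 1 ≤ n ∧ J n ω = j}

/-- Mean recurrence time `μ_{ii} = E_i[S_{τ_i}]`. -/
def mrt (P : E → Measure Ω) (J : ℕ → Ω → E) (S : ℕ → Ω → ℕ) (i : E) : ℝ :=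
  ∫ ω, (S (tau J i ω) ω : ℝ) ∂(P i)

/-- Assumption (A): irreducibility of the embedded chain, aperiodicity of the Markov
renewal chain, and positive recurrence. -/
def AssumptionA (P : E → Measure Ω) (J : ℕ → Ω → E) (S : ℕ → Ω → ℕ) : Prop :=
  (∀ i j : E, 0 < P i {ω | ∃ n, 1 ≤ n ∧ J n ω = j}) ∧
  (∀ i : E, ∀ d : ℕ,
      (∀ k, 0 < P i {ω | S (tau J i ω) ω = k} → d ∣ k) → d = 1) ∧
  (∀ i : E, (∀ᵐ ω ∂(P i), ∃ n, 1 ≤ n ∧ J n ω = i) ∧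
      Integrable (fun ω => (S (tau J i ω) ω : ℝ)) (P i))

/-- `N(M)`: the number of jumps of the Markov renewal chain up to time `M`. -/
def Ncnt (S : ℕ → Ω → ℕ) (M : ℕ) (ω : Ω) : ℕ := sSup {n | S n ω ≤ M}

/-- `N_i(M)`: the number of visits of the embedded chain to `i` before time `M`. -/
def Nvis (J : ℕ → Ω → E) (S : ℕ → Ω → ℕ) (i : E) (M : ℕ) (ω : Ω) : ℕ :=
  ∑ n ∈ Finset.Icc 1 (Ncnt S M ω), if J (n-1) ω = i then 1 else 0

/-- The empirical (nonparametric) estimator `q̂(M)` of the semi-Markov kernel. -/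
def qhat (J : ℕ → Ω → E) (S : ℕ → Ω → ℕ) (M : ℕ) (ω : Ω) (i j : E) (k : ℕ) : ℝ :=
  (∑ n ∈ Finset.Icc 1 (Ncnt S M ω),
      if J (n-1) ω = i ∧ J n ω = j ∧ Xproc S n ω = k then (1:ℝ) else 0) /
    (Nvis J S i M ω : ℝ)

/-- The entry of a matrix sequence at `e = (i, j, k)`. -/
def entry (A : E → E → ℕ → ℝ) (e : E × E × ℕ) : ℝ := A e.1 e.2.1 e.2.2

/-- Matrix convolution of matrix sequences. -/
def mconv (A B : E → E → ℕ → ℝ) : E → E → ℕ → ℝ := fun i j k =>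
  ∑ l ∈ Finset.range (k+1), ∑ u, A i u l * B u j (k - l)

/-- Convolution of scalar sequences. -/
def sconv (a b : ℕ → ℝ) : ℕ → ℝ := fun k => ∑ l ∈ Finset.range (k+1), a l * b (k - l)

/-- The identity `δI` for matrix convolution. -/
def deltaI : E → E → ℕ → ℝ := fun i j k => if i = j ∧ k = 0 then 1 else 0

/-- `n`-fold matrix convolution power. -/
def mpow (A : E → E → ℕ → ℝ) : ℕ → E → E → ℕ → ℝ
  | 0 => deltaI
  | n + 1 => mconv A (mpow A n)

/-- The convolution inverse `(δI − A)^{(−1)} = ∑_{n ≥ 0} A^{(n)}`. -/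
def psiOf (A : E → E → ℕ → ℝ) : E → E → ℕ → ℝ := fun i j k => ∑' n, mpow A n i j k

/-- The operator `S`: `(S A)_{ij}(k) = 1{i=j} ∑_{j'} ∑_{k' > k} A_{ij'}(k')`. -/
def Sop (A : E → E → ℕ → ℝ) : E → E → ℕ → ℝ := fun i j k =>
  if i = j then ∑' p : E × ℕ, if k < p.2 then A i p.1 p.2 else 0 else 0

/-- Cumulative sum of a scalar sequence, `(cumul a) k = ∑_{l ≤ k} a l`. -/
def cumul (a : ℕ → ℝ) (k : ℕ) : ℝ := ∑ l ∈ Finset.range (k+1), a l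

/-- `H_j(k) = ∑_{j'} ∑_{k' ≤ k} q_{jj'}(k')`, the sojourn time c.d.f. in state `j`. -/
def Hseq (q : E → E → ℕ → ℝ) (j : E) (k : ℕ) : ℝ :=
  ∑ j', ∑ l ∈ Finset.range (k+1), q j j' l

/-- The matrix sequence `δ^{et}` with entry `1` at `et` and `0` elsewhere. -/
def deltaM (et : E × E × ℕ) : E → E → ℕ → ℝ := fun i j k => if (i, j, k) = et then 1 else 0

/-- The matrix sequence `q^{it}` with `q^{it}_{ij}(k) = 1{i = it} q_{ij}(k)`. -/
def qres (q : E → E → ℕ → ℝ) (it : E) : E → E → ℕ → ℝ :=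
  fun i j k => if i = it then q i j k else 0

/-- The semi-Markov chain `Z_k = J_{N(k)}` associated to `(J, S)`. -/
def Zproc (J : ℕ → Ω → E) (S : ℕ → Ω → ℕ) (k : ℕ) (ω : Ω) : E := J (Ncnt S k ω) ω

/-- The distribution matrix sequence `P_{ij}(k) = P_i(Z_k = j)` of the semi-Markov chain. -/
def Pdist (P : E → Measure Ω) (J : ℕ → Ω → E) (S : ℕ → Ω → ℕ) (i j : E) (k : ℕ) : ℝ :=
  (P i {ω | Zproc J S k ω = j}).toReal

/-- The estimator `P̂(M) = ψ̂(M) * S q̂(M)` of the distribution matrix sequence. -/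
def Phat (J : ℕ → Ω → E) (S : ℕ → Ω → ℕ) (M : ℕ) (ω : Ω) : E → E → ℕ → ℝ :=
  mconv (psiOf (qhat J S M ω)) (Sop (qhat J S M ω))

/-- The reliability vector sequence `R_i(k) = P_i(T_D > k)`, for `i ∈ U`,
where `D = Uᶜ` and `T_D` is the first entrance time of `Z` into `D`. -/
def Rrel (P : E → Measure Ω) (J : ℕ → Ω → E) (S : ℕ → Ω → ℕ) (U : Finset E)
    (i : E) (k : ℕ) : ℝ :=
  (P i {ω | ∀ l ≤ k, Zproc J S l ω ∈ U}).toReal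

/-- Restriction of a matrix sequence to `Ũ = U × U × ℕ` (extended by `0`). -/
def restrictUU (U : Finset E) (A : E → E → ℕ → ℝ) : E → E → ℕ → ℝ :=
  fun i j k => if i ∈ U ∧ j ∈ U then A i j k else 0

/-- Convolution of a matrix sequence with a vector sequence. -/
def mvconv (A : E → E → ℕ → ℝ) (v : E → ℕ → ℝ) : E → ℕ → ℝ := fun i k =>
  ∑ l ∈ Finset.range (k+1), ∑ u, A i u l * v u (k - l)

/-- The diagonal `(A)_U` of a matrix sequence, as a vector sequence. -/
def diagOf (A : E → E → ℕ → ℝ) : E → ℕ → ℝ := fun i k => A i i k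

/-- The estimator `R̂(M) = ψ̂_UU(M) * (S q̂(M))_U` of the reliability vector sequence. -/
def Rhat (J : ℕ → Ω → E) (S : ℕ → Ω → ℕ) (U : Finset E) (M : ℕ) (ω : Ω) : E → ℕ → ℝ :=
  mvconv (psiOf (restrictUU U (qhat J S M ω))) (diagOf (Sop (qhat J S M ω)))

/-- `μG` is the law of a centered Gaussian family indexed by `ι` with covariance `V`:
every finite linear combination of coordinates has a centered normal distribution with the
appropriate variance. -/
def IsCenteredGaussianLaw {ι : Type} (μG : Measure (ι → ℝ)) (V : ι → ι → ℝ) : Prop :=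
  ∀ a : ι →₀ ℝ,
    Measure.map (fun x => ∑ e ∈ a.support, a e * x e) μG =
      gaussianReal 0
        (Real.toNNReal (∑ e ∈ a.support, ∑ e' ∈ a.support, a e * V e e' * a e'))

/-- `(Z_e)_{e ∈ ι}` is a centered Gaussian family with covariance `V` under `P`. -/
def IsCenteredGaussianFamily {ι : Type} (P : Measure Ω) (Z : ι → Ω → ℝ)
    (V : ι → ι → ℝ) : Prop :=
  (∀ e, Measurable (Z e)) ∧
  ∀ a : ι →₀ ℝ,
    Measure.map (fun ω => ∑ e ∈ a.support, a e * Z e ω) P =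
      gaussianReal 0
        (Real.toNNReal (∑ e ∈ a.support, ∑ e' ∈ a.support, a e * V e e' * a e'))

/-- The covariance matrix `V^q` of the CLT for `q̂`, with `μr i = μ_{ii}`. -/
def Vq (q : E → E → ℕ → ℝ) (μr : E → ℝ) : (E × E × ℕ) → (E × E × ℕ) → ℝ := fun e e' =>
  μr e.1 * (if e.1 = e'.1 then 1 else 0) * entry q e *
    ((if e.2.1 = e'.2.1 ∧ e.2.2 = e'.2.2 then 1 else 0) - entry q e')

end SMCPaper

/-!
On the cylinder of paths with prescribed first `n` jumps, the `n`-th jump happens at time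
`S_n = ∑ xs`, and the event `Z_k = j` has conditional probability `(ψ * S q)_{J_n j}(k - S_n)`.
This is proved by strong induction on `k - S_n`, splitting the cylinder according to the next
jump `(u, l)`: if `l ≤ k - S_n` the chain restarts from `u` with `l` less time to go, otherwise
`Z_k = J_n`. Summing over `(u, l)` against `q` gives `S q + q * (ψ * S q)`, which is `ψ * S q`
because `ψ = δI + q * ψ` and convolution of matrix sequences is multiplication of power series
with matrix coefficients. The case `n = 0` is `P = ψ * S q`, and the renewal equation follows.
All path computations take place on the set where `S_0 = 0` and every sojourn time is positive,
which has full measure because `q_{ij}(0) = 0`.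
-/

namespace SMCPaper

section Convolution

variable {E : Type} [Fintype E] [DecidableEq E]

def toMatrixPowerSeries (A : E → E → ℕ → ℝ) : PowerSeries (Matrix E E ℝ) :=
  PowerSeries.mk fun k => Matrix.of fun i j => A i j k

lemma toMatrixPowerSeries_injective :
    Function.Injective (toMatrixPowerSeries : (E → E → ℕ → ℝ) → _) := by
  intro A B h
  funext i j k
  have hcoeff := congrArg (fun φ : PowerSeries (Matrix E E ℝ) => PowerSeries.coeff k φ i j) h
  simpa [toMatrixPowerSeries] using hcoeff

lemma toMatrixPowerSeries_mconv (A B : E → E → ℕ → ℝ) :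
    toMatrixPowerSeries (mconv A B) = toMatrixPowerSeries A * toMatrixPowerSeries B := by
  ext k i j
  simp only [toMatrixPowerSeries, PowerSeries.coeff_mk, PowerSeries.coeff_mul,
    Matrix.sum_apply, Matrix.mul_apply, Matrix.of_apply, mconv]
  rw [Finset.Nat.sum_antidiagonal_eq_sum_range_succ fun a b => ∑ u, A i u a * B u j b]

lemma toMatrixPowerSeries_add (A B : E → E → ℕ → ℝ) :
    toMatrixPowerSeries (A + B) = toMatrixPowerSeries A + toMatrixPowerSeries B := by
  ext k i j
  simp [toMatrixPowerSeries]

lemma toMatrixPowerSeries_deltaI : toMatrixPowerSeries (deltaI : E → E → ℕ → ℝ) = 1 := by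
  ext k i j
  simp only [toMatrixPowerSeries, PowerSeries.coeff_mk, PowerSeries.coeff_one, deltaI,
    Matrix.of_apply]
  split_ifs <;> simp_all [Matrix.one_apply]

variable (A : E → E → ℕ → ℝ)

lemma mpow_apply_eq_zero_of_lt (hA : ∀ i j, A i j 0 = 0) {n k : ℕ} (hk : k < n) (i j : E) :
    mpow A n i j k = 0 := by
  induction n generalizing k i with
  | zero => omega
  | succ n ih =>
    show mconv A (mpow A n) i j k = 0
    refine Finset.sum_eq_zero fun l hl => Finset.sum_eq_zero fun u _ => ?_
    rcases Nat.eq_zero_or_pos l with rfl | hl0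
    · rw [hA, zero_mul]
    · rw [ih (by rw [Finset.mem_range] at hl; omega), mul_zero]

lemma psiOf_apply_eq_sum (hA : ∀ i j, A i j 0 = 0) (i j : E) {k N : ℕ} (hkN : k ≤ N) :
    psiOf A i j k = ∑ n ∈ Finset.range (N + 1), mpow A n i j k := by
  unfold psiOf
  exact tsum_eq_sum fun n hn =>
    mpow_apply_eq_zero_of_lt A hA (by rw [Finset.mem_range] at hn; omega) i j

lemma psiOf_eq_deltaI_add_mconv (hA : ∀ i j, A i j 0 = 0) :
    psiOf A = deltaI + mconv A (psiOf A) := by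
  funext i j k
  rw [psiOf_apply_eq_sum A hA i j (Nat.le_succ k), Finset.sum_range_succ', add_comm]
  congr 1
  simp only [mpow, mconv]
  rw [Finset.sum_comm]
  refine Finset.sum_congr rfl fun l hl => ?_
  rw [Finset.sum_comm]
  refine Finset.sum_congr rfl fun u _ => ?_
  rw [← Finset.mul_sum, psiOf_apply_eq_sum A hA u j (Nat.sub_le k l)]

lemma mconv_psiOf_eq_add_mconv (hA : ∀ i j, A i j 0 = 0) (B : E → E → ℕ → ℝ) :
    mconv (psiOf A) B = B + mconv A (mconv (psiOf A) B) := by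
  apply toMatrixPowerSeries_injective
  conv_lhs => rw [psiOf_eq_deltaI_add_mconv A hA]
  simp only [toMatrixPowerSeries_mconv, toMatrixPowerSeries_add, toMatrixPowerSeries_deltaI,
    add_mul, one_mul, mul_assoc]

end Convolution

section Kernel

variable {E : Type} {A B : E → E → ℕ → ℝ}

lemma mconv_nonneg [Fintype E] (hA : ∀ i j k, 0 ≤ A i j k) (hB : ∀ i j k, 0 ≤ B i j k)
    (i j : E) (k : ℕ) : 0 ≤ mconv A B i j k :=
  Finset.sum_nonneg fun _ _ => Finset.sum_nonneg fun _ _ => mul_nonneg (hA _ _ _) (hB _ _ _)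

lemma mpow_nonneg [Fintype E] [DecidableEq E] (hA : ∀ i j k, 0 ≤ A i j k) (n : ℕ) (i j : E)
    (k : ℕ) : 0 ≤ mpow A n i j k := by
  induction n generalizing i k with
  | zero => unfold mpow deltaI; positivity
  | succ n ih => exact mconv_nonneg hA (fun i _ k => ih i k) i j k

lemma psiOf_nonneg [Fintype E] [DecidableEq E] (hA : ∀ i j k, 0 ≤ A i j k) (i j : E) (k : ℕ) :
    0 ≤ psiOf A i j k :=
  tsum_nonneg fun n => mpow_nonneg hA n i j k

lemma Sop_nonneg [DecidableEq E] (hA : ∀ i j k, 0 ≤ A i j k) (i j : E) (k : ℕ) :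
    0 ≤ Sop A i j k := by
  unfold Sop
  split_ifs
  · exact tsum_nonneg fun p => by split_ifs <;> simp [hA]
  · exact le_rfl

lemma mconv_psiOf_Sop_nonneg [Fintype E] [DecidableEq E] (hA : ∀ i j k, 0 ≤ A i j k) (i j : E)
    (k : ℕ) : 0 ≤ mconv (psiOf A) (Sop A) i j k :=
  mconv_nonneg (psiOf_nonneg hA) (Sop_nonneg hA) i j k

lemma hasSum_Sop [DecidableEq E] {q : E → E → ℕ → ℝ} (hq : IsSemiMarkovKernel q) (i j : E)
    (m : ℕ) :
    HasSum (fun p : E × ℕ => if i = j ∧ m < p.2 then q i p.1 p.2 else 0) (Sop q i j m) := by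
  unfold Sop
  split_ifs with hij
  · simp only [hij, true_and]
    refine (Summable.of_nonneg_of_le (fun p => ?_) (fun p => ?_) (hq.2.2 j).summable).hasSum
      <;> split_ifs <;> simp [hq.1]
  · simp [hij, hasSum_zero]

lemma hasSum_kernel_mul_renewal [Fintype E] [DecidableEq E] {q : E → E → ℕ → ℝ}
    (hq : IsSemiMarkovKernel q) (i j : E) (m : ℕ) :
    HasSum (fun p : E × ℕ => q i p.1 p.2 *
        if p.2 ≤ m then mconv (psiOf q) (Sop q) p.1 j (m - p.2) else if i = j then 1 else 0)
      (mconv (psiOf q) (Sop q) i j m) := by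
  set F := mconv (psiOf q) (Sop q)
  have hconv : HasSum (fun p : E × ℕ => if p.2 ≤ m then q i p.1 p.2 * F p.1 j (m - p.2) else 0)
      (mconv q F i j m) := by
    have hsupp : ∀ p ∉ Finset.univ ×ˢ Finset.range (m + 1),
        (if p.2 ≤ m then q i p.1 p.2 * F p.1 j (m - p.2) else 0) = 0 := fun p hp => by
      rw [if_neg]
      simpa [Nat.lt_succ_iff] using hp
    convert hasSum_sum_of_ne_finset_zero hsupp using 1
    · rw [Finset.sum_product, Finset.sum_comm]
      refine Finset.sum_congr rfl fun l hl => Finset.sum_congr rfl fun u _ => ?_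
      rw [if_pos (Nat.lt_succ_iff.mp (Finset.mem_range.mp hl))]
    · infer_instance
  have hF : F i j m = Sop q i j m + mconv q F i j m :=
    congr_fun₃ (mconv_psiOf_eq_add_mconv q hq.2.1 (Sop q)) i j m
  rw [hF]
  convert (hasSum_Sop hq i j m).add hconv using 2 with p
  split_ifs <;> simp_all
  omega

end Kernel

section Cylinders

variable {E Ω : Type} {J : ℕ → Ω → E} {S : ℕ → Ω → ℕ}

def cylinder (J : ℕ → Ω → E) (S : ℕ → Ω → ℕ) (n : ℕ) (js : ℕ → E) (xs : ℕ → ℕ) : Set Ω :=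
  {ω | ∀ l ≤ n, J l ω = js l ∧ Xproc S l ω = xs l}

/-- `Xproc` is a truncated difference, so `S` is known to increase only on these paths. -/
def regularPaths (S : ℕ → Ω → ℕ) : Set Ω := {ω | S 0 ω = 0 ∧ ∀ n, 1 ≤ Xproc S (n + 1) ω}

lemma cylinder_succ (n : ℕ) (js : ℕ → E) (xs : ℕ → ℕ) :
    cylinder J S (n + 1) js xs =
      {ω | J (n + 1) ω = js (n + 1) ∧ Xproc S (n + 1) ω = xs (n + 1)} ∩ cylinder J S n js xs := by
  ext ω
  simp only [cylinder, Set.mem_ofPred_eq, Set.mem_inter_iff]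
  refine ⟨fun h => ⟨h (n + 1) le_rfl, fun l hl => h l (hl.trans n.le_succ)⟩, ?_⟩
  rintro ⟨hlast, hinit⟩ l hl
  rcases Nat.lt_succ_iff_lt_or_eq.mp (Nat.lt_succ_of_le hl) with hl | rfl
  exacts [hinit l (Nat.lt_succ_iff.mp hl), hlast]

lemma cylinder_update (n : ℕ) (js : ℕ → E) (xs : ℕ → ℕ) (u : E) (x : ℕ) :
    cylinder J S n (Function.update js (n + 1) u) (Function.update xs (n + 1) x) =
      cylinder J S n js xs := by
  ext ω
  refine forall₂_congr fun l hl => ?_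
  rw [Function.update_of_ne (by omega), Function.update_of_ne (by omega)]

lemma cylinder_succ_update (n : ℕ) (js : ℕ → E) (xs : ℕ → ℕ) (u : E) (x : ℕ) :
    cylinder J S (n + 1) (Function.update js (n + 1) u) (Function.update xs (n + 1) x) =
      {ω | J (n + 1) ω = u ∧ Xproc S (n + 1) ω = x} ∩ cylinder J S n js xs := by
  rw [cylinder_succ, cylinder_update, Function.update_self, Function.update_self]

lemma cylinder_eq_iUnion (n : ℕ) (js : ℕ → E) (xs : ℕ → ℕ) :
    cylinder J S n js xs = ⋃ p : E × ℕ,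
      cylinder J S (n + 1) (Function.update js (n + 1) p.1) (Function.update xs (n + 1) p.2) := by
  ext ω
  simp only [Set.mem_iUnion, cylinder_succ_update, Set.mem_inter_iff, Set.mem_ofPred_eq]
  exact ⟨fun h => ⟨(J (n + 1) ω, Xproc S (n + 1) ω), ⟨rfl, rfl⟩, h⟩, fun ⟨_, _, h⟩ => h⟩

lemma pairwise_disjoint_cylinder_succ_update (n : ℕ) (js : ℕ → E) (xs : ℕ → ℕ) :
    Pairwise (Function.onFun Disjoint fun p : E × ℕ =>
      cylinder J S (n + 1) (Function.update js (n + 1) p.1) (Function.update xs (n + 1) p.2)) := by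
  intro p p' hpp'
  simp only [Function.onFun, cylinder_succ_update]
  refine Set.disjoint_left.mpr fun ω ⟨⟨hu, hx⟩, _⟩ ⟨⟨hu', hx'⟩, _⟩ => hpp' ?_
  exact Prod.ext (hu.symm.trans hu') (hx.symm.trans hx')

lemma sum_Icc_update_succ (xs : ℕ → ℕ) (n x : ℕ) :
    ∑ l ∈ Finset.Icc 1 (n + 1), Function.update xs (n + 1) x l =
      ∑ l ∈ Finset.Icc 1 n, xs l + x := by
  rw [Finset.sum_Icc_succ_top (by omega), Function.update_self]
  congr 1
  exact Finset.sum_congr rfl fun l hl =>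
    Function.update_of_ne (by rw [Finset.mem_Icc] at hl; omega) _ _

lemma measure_null_of_inter_cylinder [Countable E] [MeasurableSpace Ω] {μ : Measure Ω}
    {A : Set Ω} (n : ℕ) (h : ∀ js xs, μ (A ∩ cylinder J S n js xs) = 0) : μ A = 0 := by
  induction n with
  | zero =>
    refine measure_mono_null ?_
      (measure_iUnion_null fun p : E × ℕ => h (fun _ => p.1) (fun _ => p.2))
    refine fun ω hω => Set.mem_iUnion.2 ⟨(J 0 ω, Xproc S 0 ω), hω, fun l hl => ?_⟩
    rw [Nat.le_zero.mp hl]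
    exact ⟨rfl, rfl⟩
  | succ n ih =>
    refine ih fun js xs => ?_
    rw [cylinder_eq_iUnion, Set.inter_iUnion]
    exact measure_iUnion_null fun _ => h _ _

lemma S_succ_of_mem_regularPaths {ω : Ω} (hω : ω ∈ regularPaths S) (n : ℕ) :
    S (n + 1) ω = S n ω + Xproc S (n + 1) ω := by
  have := hω.2 n
  simp only [Xproc, add_tsub_cancel_right] at this ⊢
  omega

lemma strictMono_of_mem_regularPaths {ω : Ω} (hω : ω ∈ regularPaths S) :
    StrictMono fun n => S n ω :=
  strictMono_nat_of_lt_succ fun n => by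
    rw [S_succ_of_mem_regularPaths hω n]
    have := hω.2 n
    omega

lemma S_eq_sum_of_mem_cylinder {ω : Ω} (hreg : ω ∈ regularPaths S) {n : ℕ} {js : ℕ → E}
    {xs : ℕ → ℕ} (hω : ω ∈ cylinder J S n js xs) : S n ω = ∑ l ∈ Finset.Icc 1 n, xs l := by
  induction n with
  | zero => simpa using hreg.1
  | succ n ih =>
    rw [cylinder_succ] at hω
    rw [S_succ_of_mem_regularPaths hreg, ih hω.2, hω.1.2, Finset.sum_Icc_succ_top (by omega)]

lemma Ncnt_eq_of_mem_regularPaths {ω : Ω} (hω : ω ∈ regularPaths S) {n k : ℕ}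
    (hn : S n ω ≤ k) (hk : k < S (n + 1) ω) : Ncnt S k ω = n := by
  refine IsGreatest.csSup_eq ⟨hn, fun m hm => ?_⟩
  by_contra! hnm
  have := (strictMono_of_mem_regularPaths hω).monotone (show n + 1 ≤ m from hnm)
  simp only [Set.mem_ofPred_eq] at hm
  omega

lemma Ncnt_spec_of_mem_regularPaths {ω : Ω} (hω : ω ∈ regularPaths S) (k : ℕ) :
    S (Ncnt S k ω) ω ≤ k ∧ k < S (Ncnt S k ω + 1) ω := by
  have hbdd : BddAbove {m | S m ω ≤ k} :=
    ⟨k, fun m hm => ((strictMono_of_mem_regularPaths hω).id_le m).trans hm⟩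
  have hmem : Ncnt S k ω ∈ {m | S m ω ≤ k} :=
    Nat.sSup_mem ⟨0, by simp [hω.1]⟩ hbdd
  refine ⟨hmem, lt_of_not_ge fun h => ?_⟩
  have := le_csSup hbdd h
  simp only [Ncnt] at this
  omega

lemma Zproc_eq_of_mem_cylinder {ω : Ω} (hreg : ω ∈ regularPaths S) {n : ℕ} {js : ℕ → E}
    {xs : ℕ → ℕ} (hω : ω ∈ cylinder J S n js xs) {k : ℕ}
    (hk : ∑ l ∈ Finset.Icc 1 n, xs l ≤ k)
    (hk' : k < ∑ l ∈ Finset.Icc 1 n, xs l + Xproc S (n + 1) ω) :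
    Zproc J S k ω = js n := by
  have hS := S_eq_sum_of_mem_cylinder hreg hω
  rw [Zproc, Ncnt_eq_of_mem_regularPaths hreg (hS ▸ hk)
    (by rw [S_succ_of_mem_regularPaths hreg, hS]; exact hk')]
  exact (hω n le_rfl).1

end Cylinders

section MarkovRenewal

variable {E Ω : Type} [MeasurableSpace Ω] {J : ℕ → Ω → E} {S : ℕ → Ω → ℕ}

lemma measurable_Xproc (hS : ∀ n k, MeasurableSet {ω | S n ω = k}) (n : ℕ) :
    Measurable (Xproc S n) :=
  (measurable_to_countable' (hS n)).sub (measurable_to_countable' (hS (n - 1)))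

lemma measurableSet_cylinder (hJ : ∀ n i, MeasurableSet {ω | J n ω = i})
    (hS : ∀ n k, MeasurableSet {ω | S n ω = k}) (n : ℕ) (js : ℕ → E) (xs : ℕ → ℕ) :
    MeasurableSet (cylinder J S n js xs) := by
  simp only [cylinder, Set.ofPred_forall, Set.ofPred_and]
  exact .iInter fun l => .iInter fun _ =>
    (hJ l (js l)).inter (measurable_Xproc hS l (measurableSet_singleton _))

lemma measurableSet_regularPaths (hS : ∀ n k, MeasurableSet {ω | S n ω = k}) :
    MeasurableSet (regularPaths S) := by
  simp only [regularPaths, Set.ofPred_forall, Set.ofPred_and]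
  exact (hS 0 0).inter (.iInter fun n => measurableSet_le measurable_const (measurable_Xproc hS _))

lemma measurableSet_Zproc_inter_regularPaths (hJ : ∀ n i, MeasurableSet {ω | J n ω = i})
    (hS : ∀ n k, MeasurableSet {ω | S n ω = k}) (k : ℕ) (j : E) :
    MeasurableSet ({ω | Zproc J S k ω = j} ∩ regularPaths S) := by
  have hunion : {ω | Zproc J S k ω = j} ∩ regularPaths S =
      ⋃ n, ({ω | S n ω ≤ k} ∩ {ω | k < S (n + 1) ω} ∩ {ω | J n ω = j}) ∩ regularPaths S := by
    ext ω
    simp only [Set.mem_iUnion, Set.mem_inter_iff, Set.mem_ofPred_eq]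
    constructor
    · rintro ⟨hZ, hω⟩
      exact ⟨Ncnt S k ω, ⟨Ncnt_spec_of_mem_regularPaths hω k, hZ⟩, hω⟩
    · rintro ⟨n, ⟨⟨hn, hk⟩, hJn⟩, hω⟩
      exact ⟨by rw [Zproc, Ncnt_eq_of_mem_regularPaths hω hn hk, hJn], hω⟩
  rw [hunion]
  exact .iUnion fun n => ((((measurable_to_countable' (hS n)) measurableSet_Iic).inter
    ((measurable_to_countable' (hS (n + 1))) measurableSet_Ioi)).inter (hJ n j)).inter
    (measurableSet_regularPaths hS)

lemma measure_cylinder_inter_eq_tsum [Countable E] (hJ : ∀ n i, MeasurableSet {ω | J n ω = i})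
    (hS : ∀ n k, MeasurableSet {ω | S n ω = k}) (μ : Measure Ω) {B : Set Ω}
    (hB : MeasurableSet B) (n : ℕ) (js : ℕ → E) (xs : ℕ → ℕ) :
    μ (cylinder J S n js xs ∩ B) = ∑' p : E × ℕ, μ (cylinder J S (n + 1)
      (Function.update js (n + 1) p.1) (Function.update xs (n + 1) p.2) ∩ B) := by
  rw [cylinder_eq_iUnion, Set.iUnion_inter]
  refine measure_iUnion (fun p p' hpp' => ?_) fun p => (measurableSet_cylinder hJ hS _ _ _).inter hB
  exact (pairwise_disjoint_cylinder_succ_update n js xs hpp').mono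
    Set.inter_subset_left Set.inter_subset_left

variable {q : E → E → ℕ → ℝ} {P : E → Measure Ω}

lemma measure_cylinder_succ (hchain : IsMarkovRenewalChain P J S q) (i₀ : E) (n : ℕ)
    (js : ℕ → E) (xs : ℕ → ℕ) :
    P i₀ (cylinder J S (n + 1) js xs) =
      ENNReal.ofReal (q (js n) (js (n + 1)) (xs (n + 1))) * P i₀ (cylinder J S n js xs) := by
  rw [cylinder_succ]
  exact hchain.2.2.2.2 i₀ n js xs

lemma measure_cylinder_succ_update (hchain : IsMarkovRenewalChain P J S q) (i₀ : E) (n : ℕ)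
    (js : ℕ → E) (xs : ℕ → ℕ) (u : E) (x : ℕ) :
    P i₀ (cylinder J S (n + 1) (Function.update js (n + 1) u) (Function.update xs (n + 1) x)) =
      ENNReal.ofReal (q (js n) u x) * P i₀ (cylinder J S n js xs) := by
  rw [measure_cylinder_succ hchain, Function.update_self, Function.update_self,
    Function.update_of_ne (by omega), cylinder_update]

lemma ae_initial (hchain : IsMarkovRenewalChain P J S q) (i₀ : E) :
    ∀ᵐ ω ∂P i₀, J 0 ω = i₀ ∧ S 0 ω = 0 := by
  have := hchain.1 i₀
  exact (prob_compl_eq_zero_iff ((hchain.2.1 0 i₀).inter (hchain.2.2.1 0 0))).2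
    (hchain.2.2.2.1 i₀)

lemma measure_Xproc_succ_eq_zero [Countable E] (hq0 : ∀ i j, q i j 0 = 0)
    (hchain : IsMarkovRenewalChain P J S q) (i₀ : E) (n : ℕ) :
    P i₀ {ω | Xproc S (n + 1) ω = 0} = 0 := by
  refine measure_null_of_inter_cylinder (J := J) (S := S) (n + 1) fun js xs => ?_
  by_cases hx : xs (n + 1) = 0
  · refine measure_mono_null Set.inter_subset_right ?_
    rw [measure_cylinder_succ hchain, hx, hq0, ENNReal.ofReal_zero, zero_mul]
  · refine measure_mono_null (fun ω ⟨h0, hω⟩ => hx ?_) (measure_empty (μ := P i₀))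
    exact (hω (n + 1) le_rfl).2.symm.trans h0

lemma measure_compl_regularPaths [Countable E] (hq0 : ∀ i j, q i j 0 = 0)
    (hchain : IsMarkovRenewalChain P J S q) (i₀ : E) : P i₀ (regularPaths S)ᶜ = 0 := by
  rw [← mem_ae_iff]
  have hjumps : ∀ᵐ ω ∂P i₀, ∀ n, Xproc S (n + 1) ω ≠ 0 :=
    ae_all_iff.2 fun n => by simpa [ae_iff] using measure_Xproc_succ_eq_zero hq0 hchain i₀ n
  filter_upwards [ae_initial hchain i₀, hjumps] with ω hinit hjump
  exact ⟨hinit.2, fun n => Nat.one_le_iff_ne_zero.2 (hjump n)⟩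

end MarkovRenewal

section Renewal

variable {E Ω : Type} [Fintype E] [DecidableEq E] [MeasurableSpace Ω] {J : ℕ → Ω → E}
  {S : ℕ → Ω → ℕ} {q : E → E → ℕ → ℝ} {P : E → Measure Ω}

lemma measure_cylinder_succ_update_inter_Zproc_of_lt (hq0 : ∀ i j, q i j 0 = 0)
    (hchain : IsMarkovRenewalChain P J S q) (i₀ : E) {n : ℕ} {js : ℕ → E} {xs : ℕ → ℕ}
    {k m l : ℕ} (hk : ∑ r ∈ Finset.Icc 1 n, xs r + m = k) (hml : m < l) (u j : E) :
    P i₀ (cylinder J S (n + 1) (Function.update js (n + 1) u) (Function.update xs (n + 1) l) ∩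
        ({ω | Zproc J S k ω = j} ∩ regularPaths S)) =
      (if js n = j then 1 else 0) * P i₀
        (cylinder J S (n + 1) (Function.update js (n + 1) u) (Function.update xs (n + 1) l)) := by
  rw [cylinder_succ_update]
  have hstay : ∀ ω ∈ {ω | J (n + 1) ω = u ∧ Xproc S (n + 1) ω = l} ∩ cylinder J S n js xs,
      ω ∈ regularPaths S → Zproc J S k ω = js n := fun ω hω hreg =>
    Zproc_eq_of_mem_cylinder hreg hω.2 (by omega) (by rw [hω.1.2]; omega)
  split_ifs with hj
  · rw [one_mul]
    refine (congrArg (P i₀) (Set.ext fun ω => ?_)).trans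
      (measure_inter_conull (measure_compl_regularPaths hq0 hchain i₀))
    exact ⟨fun ⟨hω, _, hreg⟩ => ⟨hω, hreg⟩, fun ⟨hω, hreg⟩ =>
      ⟨hω, (hstay ω hω hreg).trans hj, hreg⟩⟩
  · rw [zero_mul]
    exact measure_mono_null (fun ω ⟨hω, hZ, hreg⟩ => hj ((hstay ω hω hreg).symm.trans hZ))
      measure_empty

theorem measure_cylinder_inter_Zproc (hq : IsSemiMarkovKernel q)
    (hchain : IsMarkovRenewalChain P J S q) (i₀ : E) (m : ℕ) :
    ∀ (n : ℕ) (js : ℕ → E) (xs : ℕ → ℕ) (k : ℕ) (j : E), ∑ l ∈ Finset.Icc 1 n, xs l + m = k →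
      P i₀ (cylinder J S n js xs ∩ ({ω | Zproc J S k ω = j} ∩ regularPaths S)) =
        ENNReal.ofReal (mconv (psiOf q) (Sop q) (js n) j m) * P i₀ (cylinder J S n js xs) := by
  induction m using Nat.strong_induction_on with
  | _ m ih =>
  intro n js xs k j hk
  set F := mconv (psiOf q) (Sop q)
  set B := {ω | Zproc J S k ω = j} ∩ regularPaths S
  set w : E × ℕ → ℝ := fun p =>
    q (js n) p.1 p.2 * if p.2 ≤ m then F p.1 j (m - p.2) else if js n = j then 1 else 0
  have hnext : ∀ p : E × ℕ, P i₀ (cylinder J S (n + 1) (Function.update js (n + 1) p.1)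
      (Function.update xs (n + 1) p.2) ∩ B) =
        ENNReal.ofReal (w p) * P i₀ (cylinder J S n js xs) := by
    rintro ⟨u, l⟩
    simp only [w]
    rw [ENNReal.ofReal_mul (hq.1 _ _ _), mul_comm (ENNReal.ofReal (q _ _ _)), mul_assoc,
      ← measure_cylinder_succ_update hchain]
    rcases Nat.eq_zero_or_pos l with rfl | hl0
    · rw [measure_cylinder_succ_update hchain, hq.2.1, ENNReal.ofReal_zero, zero_mul, mul_zero]
      exact measure_mono_null Set.inter_subset_left
        (by rw [measure_cylinder_succ_update hchain, hq.2.1, ENNReal.ofReal_zero, zero_mul])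
    by_cases hlm : l ≤ m
    · rw [if_pos hlm, ih (m - l) (by omega) (n + 1) _ _ k j (by rw [sum_Icc_update_succ]; omega),
        Function.update_self]
    rw [if_neg hlm, measure_cylinder_succ_update_inter_Zproc_of_lt hq.2.1 hchain i₀ hk
      (not_le.mp hlm), apply_ite ENNReal.ofReal, ENNReal.ofReal_one, ENNReal.ofReal_zero]
  have hsum : HasSum w (F (js n) j m) := hasSum_kernel_mul_renewal hq (js n) j m
  have hw : ∀ p, 0 ≤ w p := fun p => mul_nonneg (hq.1 _ _ _)
    (by split_ifs <;> first | positivity | exact mconv_psiOf_Sop_nonneg hq.1 _ _ _)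
  rw [measure_cylinder_inter_eq_tsum hchain.2.1 hchain.2.2.1 _
      (measurableSet_Zproc_inter_regularPaths hchain.2.1 hchain.2.2.1 k j),
    tsum_congr hnext, ENNReal.tsum_mul_right, ← ENNReal.ofReal_tsum_of_nonneg hw hsum.summable,
    hsum.tsum_eq]

theorem Pdist_eq_mconv_psiOf_Sop (hq : IsSemiMarkovKernel q)
    (hchain : IsMarkovRenewalChain P J S q) : Pdist P J S = mconv (psiOf q) (Sop q) := by
  funext i j k
  have hstart : P i (cylinder J S 0 (fun _ => i) (fun _ => 0))ᶜ = 0 := by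
    rw [← mem_ae_iff]
    filter_upwards [ae_initial hchain i] with ω hω l hl
    obtain rfl := Nat.le_zero.mp hl
    exact ⟨hω.1, Nat.sub_self _⟩
  have := hchain.1 i
  have hZ := measure_cylinder_inter_Zproc hq hchain i k 0 (fun _ => i) (fun _ => 0) k j (by simp)
  rw [Set.inter_comm, measure_inter_conull hstart, measure_inter_conull
    (measure_compl_regularPaths hq.2.1 hchain i), (prob_compl_eq_zero_iff
      (measurableSet_cylinder hchain.2.1 hchain.2.2.1 _ _ _)).1 hstart, mul_one] at hZ
  rw [Pdist, hZ, ENNReal.toReal_ofReal (mconv_psiOf_Sop_nonneg hq.1 i j k)]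

end Renewal

variable {E : Type} [Fintype E] [DecidableEq E] {Ω : Type} [MeasurableSpace Ω]

/-- The distribution matrix sequence of the semi-Markov chain satisfies the renewal
equation `P = S q + q * P`, and consequently `P = ψ * S q`. -/
theorem statement6 (q : E → E → ℕ → ℝ) (P : E → Measure Ω) (J : ℕ → Ω → E)
    (S : ℕ → Ω → ℕ) (hq : IsSemiMarkovKernel q)
    (hchain : IsMarkovRenewalChain P J S q) :
    (∀ (i j : E) (k : ℕ),
        Pdist P J S i j k = Sop q i j k + mconv q (Pdist P J S) i j k) ∧
    ∀ (i j : E) (k : ℕ),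
      Pdist P J S i j k = mconv (psiOf q) (Sop q) i j k := by
  rw [Pdist_eq_mconv_psiOf_Sop hq hchain]
  exact ⟨fun i j k => congr_fun₃ (mconv_psiOf_eq_add_mconv q hq.2.1 (Sop q)) i j k,
    fun _ _ _ => rfl⟩

end SMCPaper
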